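/- arXiv:1502.07296 — 4 statements merged into one kernel-verified Lean document; each statement's English description precedes it below -/
import Mathlib

section
/- Let ν be an admissible measure on ℝ² and suppose Δ_k, Δ are convex polygonal sets with ν(Δ_k Δ Δ) → 0 as k → ∞, where Δ has nonempty interior. Then there exist x₀, y₀, y₁ ∈ ℝ with y₀ < y₁ and K > 0 such that for all k > K the vertical segment {x₀} × [y₀, y₁] is contained in Δ_k ∩ Δ. -/
open MeasureTheory Filter Set

/-- A density `g` on `ℝ` is admissible if it is positive, `x * g x` is
integrable, and `g` is bounded and bounded away from zero on every compact
interval. -/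
def AdmissibleDensity (g : ℝ → ℝ) : Prop :=
  Measurable g ∧ (∀ x, 0 < g x) ∧ Integrable (fun x => x * g x) ∧
    ∀ K : Set ℝ, IsCompact K → ∃ c C : ℝ, 0 < c ∧ ∀ x ∈ K, c ≤ g x ∧ g x ≤ C

/-- A measure `ν` on `ℝ²` is admissible if its Radon–Nikodym derivative with
respect to Lebesgue measure depends only on the `x`-coordinate and is an
admissible density. -/
def IsAdmissible (ν : Measure (ℝ × ℝ)) : Prop :=
  ∃ g : ℝ → ℝ, AdmissibleDensity g ∧
    ν = (volume : Measure (ℝ × ℝ)).withDensity (fun p => ENNReal.ofReal (g p.1))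

/-- A convex polygonal set: an intersection of closed half-planes with at most
finitely many corner (extreme) points on each compact subset. -/
def IsConvexPolygonalSet (Δ : Set (ℝ × ℝ)) : Prop :=
  (∃ (ι : Type) (S : ι → Set (ℝ × ℝ)),
      (∀ i, ∃ a b c : ℝ, (a, b) ≠ (0, 0) ∧ S i = {p : ℝ × ℝ | a * p.1 + b * p.2 ≤ c}) ∧
      Δ = ⋂ i, S i) ∧
    ∀ K : Set (ℝ × ℝ), IsCompact K → (K ∩ Set.extremePoints ℝ Δ).Finite

lemma coord_abs_of_mem_closedBall {w z : ℝ × ℝ} {t : ℝ} (h : w ∈ Metric.closedBall z t) :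
    |w.1 - z.1| ≤ t ∧ |w.2 - z.2| ≤ t := by
  rw [Metric.mem_closedBall, Prod.dist_eq, Real.dist_eq, Real.dist_eq, max_le_iff] at h
  exact h

lemma mem_closedBall_of_coord_abs {w z : ℝ × ℝ} {t : ℝ} (h1 : |w.1 - z.1| ≤ t)
    (h2 : |w.2 - z.2| ≤ t) : w ∈ Metric.closedBall z t := by
  rw [Metric.mem_closedBall, Prod.dist_eq, Real.dist_eq, Real.dist_eq, max_le_iff]
  exact ⟨h1, h2⟩

lemma exists_dir (a b : ℝ) :
    ∃ n : ℝ × ℝ, |n.1| ≤ 1 ∧ |n.2| ≤ 1 ∧ a * n.1 + b * n.2 = max |a| |b| := by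
  rcases le_total |b| |a| with hab | hab
  · rcases le_or_gt 0 a with ha | ha
    · exact ⟨(1, 0), by norm_num, by norm_num, by
        rw [max_eq_left hab, abs_of_nonneg ha]; ring⟩
    · exact ⟨(-1, 0), by norm_num, by norm_num, by
        rw [max_eq_left hab, abs_of_neg ha]; ring⟩
  · rcases le_or_gt 0 b with hb | hb
    · exact ⟨(0, 1), by norm_num, by norm_num, by
        rw [max_eq_right hab, abs_of_nonneg hb]; ring⟩
    · exact ⟨(0, -1), by norm_num, by norm_num, by
        rw [max_eq_right hab, abs_of_neg hb]; ring⟩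

/-- if `ν (Δk k ∆ Δ) → 0` for convex polygonal sets with `Δ`
having nonempty interior, then some vertical segment is eventually contained in
`Δk k ∩ Δ`. -/
theorem eventually_segment_subset (ν : Measure (ℝ × ℝ)) (hν : IsAdmissible ν)
    (Δ : Set (ℝ × ℝ)) (Δk : ℕ → Set (ℝ × ℝ))
    (hΔ : IsConvexPolygonalSet Δ) (hΔk : ∀ k, IsConvexPolygonalSet (Δk k))
    (hint : (interior Δ).Nonempty)
    (h : Tendsto (fun k => ν (symmDiff (Δk k) Δ)) atTop (nhds 0)) :
    ∃ (x₀ y₀ y₁ : ℝ) (K : ℕ), y₀ < y₁ ∧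
      ∀ k > K, ({x₀} ×ˢ Set.Icc y₀ y₁ : Set (ℝ × ℝ)) ⊆ Δk k ∩ Δ := by
  obtain ⟨g, ⟨hgm, hgpos, -, hgbd⟩, hνeq⟩ := hν
  obtain ⟨p, hp⟩ := hint
  obtain ⟨r, hr, hballr⟩ := Metric.isOpen_iff.1 isOpen_interior p hp
  set R : ℝ := r / 2 with hR
  clear_value R
  have hRpos : 0 < R := by rw [hR]; positivity
  have hballΔ : Metric.closedBall p R ⊆ Δ := fun w hw => interior_subset
    (hballr (lt_of_le_of_lt (Metric.mem_closedBall.1 hw) (by simp [hR]; linarith)))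
  -- lower bound on g on the relevant x-interval
  obtain ⟨c, C, hc, hcC⟩ := hgbd (Icc (p.1 - R) (p.1 + R)) isCompact_Icc
  set ε : ENNReal := ENNReal.ofReal c * (ENNReal.ofReal (R/8) * ENNReal.ofReal (R/8)) with hεdef
  clear_value ε
  have hε : 0 < ε := by
    rw [hεdef]
    have h8 : (0:ENNReal) < ENNReal.ofReal (R/8) := ENNReal.ofReal_pos.2 (by positivity)
    exact ENNReal.mul_pos (ENNReal.ofReal_pos.2 hc).ne' (ENNReal.mul_pos h8.ne' h8.ne').ne'
  -- any small ball inside the big ball has ν-measure ≥ ε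
  have lb : ∀ z : ℝ × ℝ, Metric.closedBall z (R/16) ⊆ Metric.closedBall p R →
      ε ≤ ν (Metric.closedBall z (R/16)) := by
    intro z hsub
    have hmeas : MeasurableSet (Metric.closedBall z (R/16)) := measurableSet_closedBall
    rw [hνeq, withDensity_apply _ hmeas]
    have hvol : (volume : Measure (ℝ × ℝ)) (Metric.closedBall z (R/16)) =
        ENNReal.ofReal (R/8) * ENNReal.ofReal (R/8) := by
      rw [show Metric.closedBall z (R/16) = Metric.closedBall z.1 (R/16) ×ˢ
            Metric.closedBall z.2 (R/16) from (closedBall_prod_same _ _ _).symm,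
        Measure.volume_eq_prod, Measure.prod_prod, Real.volume_closedBall,
        Real.volume_closedBall, show 2 * (R/16) = R/8 by ring]
    calc ε = ENNReal.ofReal c * volume (Metric.closedBall z (R/16)) := by rw [hεdef, hvol]
      _ ≤ ∫⁻ w in Metric.closedBall z (R/16), ENNReal.ofReal (g w.1) ∂volume := by
          rw [← setLIntegral_const]
          refine setLIntegral_mono (ENNReal.measurable_ofReal.comp (hgm.comp measurable_fst))
            (fun w hw => ENNReal.ofReal_le_ofReal ?_)
          have hw' := coord_abs_of_mem_closedBall (hsub hw)
          have hwp := coord_abs_of_mem_closedBall (hsub hw)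
          have : |w.1 - p.1| ≤ R := (coord_abs_of_mem_closedBall (hsub hw)).1
          exact (hcC w.1 ⟨by linarith [abs_le.1 this |>.1], by linarith [abs_le.1 this |>.2]⟩).1
  -- eventually ν(symmDiff) < ε
  obtain ⟨K, hK⟩ := eventually_atTop.1 (h.eventually (gt_mem_nhds hε))
  -- eventually the half ball is inside Δk
  have hsubk : ∀ k ≥ K, Metric.closedBall p (R/2) ⊆ Δk k := by
    intro k hk
    by_contra hcon
    obtain ⟨q, hq, hqk⟩ := not_subset.1 hcon
    obtain ⟨⟨ι, S, hS, hSeq⟩, -⟩ := hΔk k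
    rw [hSeq, mem_iInter, not_forall] at hqk
    obtain ⟨i, hqi⟩ := hqk
    obtain ⟨a, b, c₀, hab, hSi⟩ := hS i
    rw [hSi] at hqi
    have hqi' : c₀ < a * q.1 + b * q.2 := not_le.1 hqi
    set s : ℝ := max |a| |b| with hs
    clear_value s
    have hspos : 0 < s := by
      rw [hs]
      rcases lt_or_ge 0 (max |a| |b|) with h' | h'
      · exact h'
      · exfalso
        have ha : a = 0 := abs_eq_zero.1 (le_antisymm (le_trans (le_max_left _ _) h') (abs_nonneg _))
        have hb : b = 0 := abs_eq_zero.1 (le_antisymm (le_trans (le_max_right _ _) h') (abs_nonneg _))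
        exact hab (by rw [ha, hb])
    obtain ⟨n, hn1, hn2, hn3⟩ := exists_dir a b
    set z : ℝ × ℝ := (q.1 + (R/4) * n.1, q.2 + (R/4) * n.2) with hz
    clear_value z
    have hqp := coord_abs_of_mem_closedBall hq
    -- the small ball around z lies in Δ \ Δk k
    have hBp : Metric.closedBall z (R/16) ⊆ Metric.closedBall p R := by
      intro w hw
      have hwz := coord_abs_of_mem_closedBall hw
      refine mem_closedBall_of_coord_abs ?_ ?_
      · have : |w.1 - p.1| ≤ |w.1 - z.1| + |(R/4) * n.1| + |q.1 - p.1| := by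
          calc |w.1 - p.1| = |(w.1 - z.1) + ((R/4) * n.1 + (q.1 - p.1))| := by
                simp [hz]; ring_nf
            _ ≤ _ := by
                refine le_trans (abs_add_le _ _) ?_
                have := abs_add_le ((R/4) * n.1) (q.1 - p.1)
                linarith
        have h4 : |(R/4) * n.1| ≤ R/4 := by
          rw [abs_mul, abs_of_nonneg (by positivity : (0:ℝ) ≤ R/4)]
          nlinarith
        linarith [hwz.1, hqp.1]
      · have : |w.2 - p.2| ≤ |w.2 - z.2| + |(R/4) * n.2| + |q.2 - p.2| := by
          calc |w.2 - p.2| = |(w.2 - z.2) + ((R/4) * n.2 + (q.2 - p.2))| := by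
                simp [hz]; ring_nf
            _ ≤ _ := by
                refine le_trans (abs_add_le _ _) ?_
                have := abs_add_le ((R/4) * n.2) (q.2 - p.2)
                linarith
        have h4 : |(R/4) * n.2| ≤ R/4 := by
          rw [abs_mul, abs_of_nonneg (by positivity : (0:ℝ) ≤ R/4)]
          nlinarith
        linarith [hwz.2, hqp.2]
    have hBd : Metric.closedBall z (R/16) ⊆ Δ \ Δk k := by
      intro w hw
      refine ⟨hballΔ (hBp hw), ?_⟩
      intro hwk
      rw [hSeq, mem_iInter] at hwk
      have hwi : a * w.1 + b * w.2 ≤ c₀ := by have := hwk i; rwa [hSi] at this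
      have hwz := coord_abs_of_mem_closedBall hw
      have haS : |a| ≤ s := by rw [hs]; exact le_max_left _ _
      have hbS : |b| ≤ s := by rw [hs]; exact le_max_right _ _
      have h1 : a * (w.1 - z.1) ≥ -(s * (R/16)) := by
        have h1a := neg_abs_le (a * (w.1 - z.1))
        rw [abs_mul] at h1a
        have h1b := mul_le_mul haS hwz.1 (abs_nonneg _) hspos.le
        exact (neg_le_neg h1b).trans h1a
      have h2 : b * (w.2 - z.2) ≥ -(s * (R/16)) := by
        have h2a := neg_abs_le (b * (w.2 - z.2))
        rw [abs_mul] at h2a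
        have h2b := mul_le_mul hbS hwz.2 (abs_nonneg _) hspos.le
        exact (neg_le_neg h2b).trans h2a
      have hzv : a * z.1 + b * z.2 = a * q.1 + b * q.2 + (R/4) * s := by
        simp only [hz]
        rw [hs, ← hn3]; ring
      have : a * w.1 + b * w.2 =
          a * z.1 + b * z.2 + (a * (w.1 - z.1) + b * (w.2 - z.2)) := by ring
      nlinarith [mul_pos hspos hRpos, h1, h2, hzv, hwi, hqi', this]
    have hle : ε ≤ ν (symmDiff (Δk k) Δ) := by
      refine le_trans (lb z hBp) (measure_mono (hBd.trans ?_))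
      intro w hw
      exact Or.inr ⟨hw.1, hw.2⟩
    exact absurd (lt_of_le_of_lt hle (hK k hk)) (not_lt.2 le_rfl)
  refine ⟨p.1, p.2 - R/2, p.2 + R/2, K, by linarith, ?_⟩
  intro k hk w hw
  rw [mem_prod, mem_singleton_iff] at hw
  have hwball : w ∈ Metric.closedBall p (R/2) := by
    refine mem_closedBall_of_coord_abs ?_ ?_
    · rw [hw.1]; simp; positivity
    · rw [abs_le]
      constructor <;> [linarith [hw.2.1]; linarith [hw.2.2]]
  exact ⟨hsubk k (le_of_lt hk) hwball,
    hballΔ (Metric.closedBall_subset_closedBall (by linarith) hwball)⟩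
end

section
/- With the setup above, the function D(x, x') = min over p ∈ S_{k(x),k(x')} of d^p(x,x') (when S_{k(x),k(x')} ≠ ∅) satisfies the triangle inequality: for any x, x', x'' with all three pairwise comparable, D(x,x') ≤ D(x,x'') + D(x'',x'). -/
open Filter Set

/-- The set of permutations `p` of `{1,…,m}` such that `u j = v (p j) + c` for
some integer `c` (appropriate permutations for `u` and `v`). -/
def Sperm (m : ℕ) (u v : Fin m → ℤ) : Set (Equiv.Perm (Fin m)) :=
  {p | ∃ c : ℤ, ∀ j, u j = v (p j) + c}

/-- the distance `D(x,x') = min over appropriate permutations p of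
d^p(x,x')` satisfies the triangle inequality. -/
theorem min_dist_triangle {X : Type*} [MetricSpace X] (m : ℕ) (k k' k'' : Fin m → ℤ)
    (x x' x'' : Fin m → X)
    (h1 : (Sperm m k k').Nonempty) (h2 : (Sperm m k k'').Nonempty)
    (h3 : (Sperm m k'' k').Nonempty) :
    sInf ((fun p : Equiv.Perm (Fin m) => ∑ j, dist (x j) (x' (p j))) '' Sperm m k k') ≤
      sInf ((fun q : Equiv.Perm (Fin m) => ∑ j, dist (x j) (x'' (q j))) '' Sperm m k k'') +
      sInf ((fun r : Equiv.Perm (Fin m) => ∑ j, dist (x'' j) (x' (r j))) '' Sperm m k'' k') := by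
  obtain ⟨q, hq, hqb⟩ := (h2.image (fun q : Equiv.Perm (Fin m) => ∑ j, dist (x j) (x'' (q j)))).csInf_mem (Set.toFinite _)
  obtain ⟨r, hr, hrc⟩ := (h3.image (fun r : Equiv.Perm (Fin m) => ∑ j, dist (x'' j) (x' (r j)))).csInf_mem (Set.toFinite _)
  rw [← hqb, ← hrc]
  have hp : q.trans r ∈ Sperm m k k' := by
    obtain ⟨c1, hc1⟩ := hq
    obtain ⟨c2, hc2⟩ := hr
    exact ⟨c2 + c1, fun j => by simp [hc1 j, hc2 (q j)]; ring⟩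
  calc sInf ((fun p : Equiv.Perm (Fin m) => ∑ j, dist (x j) (x' (p j))) '' Sperm m k k')
      ≤ ∑ j, dist (x j) (x' ((q.trans r) j)) :=
        csInf_le (Set.Finite.bddBelow (Set.toFinite _)) ⟨q.trans r, hp, rfl⟩
    _ ≤ ∑ j, (dist (x j) (x'' (q j)) + dist (x'' (q j)) (x' (r (q j)))) :=
        Finset.sum_le_sum fun j _ => dist_triangle _ _ _
    _ = (∑ j, dist (x j) (x'' (q j))) + ∑ j, dist (x'' (q j)) (x' (r (q j))) :=
        Finset.sum_add_distrib
    _ = (∑ j, dist (x j) (x'' (q j))) + ∑ j, dist (x'' j) (x' (r j)) := by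
        congr 1
        exact Fintype.sum_equiv q _ _ fun j => rfl
end

section
/- Let ν be an admissible measure on ℝ² and consider the collection E of measurable sets A ⊂ ℝ² of finite ν-measure, modulo ν-null symmetric difference, which admit a convex representative. With the metric d_E(A,B) = ν(A Δ B), the space E is a complete metric space. -/
open MeasureTheory Filter Set
open scoped ENNReal

/-- Discrete intermediate value: if `P N` holds and `P k` fails with `N ≤ k`,
then `P` switches from true to false at some `j ≥ N`. -/
lemma exists_switch (P : ℕ → Prop) :
    ∀ k N, N ≤ k → P N → ¬ P k → ∃ j, N ≤ j ∧ P j ∧ ¬ P (j + 1) := by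
  intro k
  induction k with
  | zero =>
    intro N hN h1 h2
    exact absurd (Nat.le_zero.mp hN ▸ h1) h2
  | succ k ih =>
    intro N hN h1 h2
    rcases Nat.eq_or_lt_of_le hN with h | h
    · exact absurd (h ▸ h1) h2
    · by_cases hk : P k
      · exact ⟨k, Nat.lt_succ_iff.mp h, hk, h2⟩
      · exact ih N (Nat.lt_succ_iff.mp h) h1 hk

/-- the space of measurable sets of finite admissible measure
admitting a convex representative modulo null symmetric difference, with the
metric given by the measure of the symmetric difference, is complete: every
Cauchy sequence converges. -/
theorem convex_sets_symmDiff_complete (ν : Measure (ℝ × ℝ)) (hν : IsAdmissible ν)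
    (A : ℕ → Set (ℝ × ℝ)) (hmeas : ∀ n, MeasurableSet (A n))
    (hfin : ∀ n, ν (A n) < ⊤)
    (hconv : ∀ n, ∃ B : Set (ℝ × ℝ), Convex ℝ B ∧ ν (symmDiff (A n) B) = 0)
    (hcauchy : ∀ ε : ℝ, 0 < ε → ∃ N : ℕ, ∀ m n : ℕ, N ≤ m → N ≤ n →
      ν (symmDiff (A m) (A n)) < ENNReal.ofReal ε) :
    ∃ L : Set (ℝ × ℝ), MeasurableSet L ∧ ν L < ⊤ ∧
      (∃ B : Set (ℝ × ℝ), Convex ℝ B ∧ ν (symmDiff L B) = 0) ∧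
      Tendsto (fun n => ν (symmDiff (A n) L)) atTop (nhds 0) := by
  classical
  choose B hBconv hBnull using hconv
  -- choose a controlling function for the Cauchy condition
  have hc2 : ∀ k : ℕ, ∃ N, ∀ m n, N ≤ m → N ≤ n →
      ν (symmDiff (A m) (A n)) < ENNReal.ofReal ((1 / 2 : ℝ) ^ k) :=
    fun k => hcauchy _ (by positivity)
  choose φ hφ using hc2
  -- a strictly increasing sequence of indices dominating φ
  let ψ : ℕ → ℕ := fun k => Nat.rec (φ 0) (fun k ih => max (ih + 1) (φ (k + 1))) k
  have hψ_succ : ∀ k, ψ k < ψ (k + 1) :=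
    fun k => lt_of_lt_of_le (Nat.lt_succ_self _) (le_max_left _ _)
  have hψφ : ∀ k, φ k ≤ ψ k := by
    intro k
    cases k with
    | zero => exact le_rfl
    | succ k => exact le_max_right _ _
  -- half in `ℝ≥0∞`
  have hhalf : ENNReal.ofReal ((1 / 2 : ℝ)) = (2 : ℝ≥0∞)⁻¹ := by
    rw [ENNReal.ofReal_div_of_pos (by norm_num)]
    norm_num
  have hofpow : ∀ k : ℕ, ENNReal.ofReal ((1 / 2 : ℝ) ^ k) = (2 : ℝ≥0∞)⁻¹ ^ k := by
    intro k
    rw [ENNReal.ofReal_pow (by norm_num), hhalf]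
  have key : ∀ k, ν (symmDiff (A (ψ k)) (A (ψ (k + 1)))) ≤ (2 : ℝ≥0∞)⁻¹ ^ k := by
    intro k
    rw [← hofpow]
    exact le_of_lt (hφ k _ _ (hψφ k) (le_trans (hψφ k) (le_of_lt (hψ_succ k))))
  -- the candidate limit: liminf of the subsequence
  set L : Set (ℝ × ℝ) := ⋃ N, ⋂ k, ⋂ (_ : N ≤ k), A (ψ k) with hL
  have hLmem : ∀ x, x ∈ L ↔ ∃ N, ∀ k, N ≤ k → x ∈ A (ψ k) := by
    intro x; simp [hL, mem_iUnion, mem_iInter]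
  -- key inclusion: symmDiff of a subsequence term with L is covered by tails
  have hsub : ∀ N, symmDiff (A (ψ N)) L ⊆
      ⋃ i : ℕ, symmDiff (A (ψ (N + i))) (A (ψ (N + i + 1))) := by
    intro N x hx
    rw [Set.mem_symmDiff] at hx
    rcases hx with ⟨hxA, hxL⟩ | ⟨hxL, hxA⟩
    · -- x ∈ A (ψ N), x ∉ L : P switches from true to false
      rw [hLmem] at hxL
      push_neg at hxL
      obtain ⟨k, hNk, hk⟩ := hxL N
      obtain ⟨j, hNj, hj1, hj2⟩ := exists_switch (fun j => x ∈ A (ψ j)) k N hNk hxA hk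
      refine mem_iUnion.mpr ⟨j - N, ?_⟩
      rw [Nat.add_sub_cancel' hNj]
      exact Set.mem_symmDiff.mpr (Or.inl ⟨hj1, hj2⟩)
    · -- x ∈ L, x ∉ A (ψ N)
      rw [hLmem] at hxL
      obtain ⟨M, hM⟩ := hxL
      have hNM : N < M := by
        by_contra h
        exact hxA (hM N (Nat.le_of_not_lt h))
      obtain ⟨j, hNj, hj1, hj2⟩ := exists_switch (fun j => x ∉ A (ψ j)) M N
        (le_of_lt hNM) hxA (not_not.mpr (hM M le_rfl))
      refine mem_iUnion.mpr ⟨j - N, ?_⟩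
      rw [Nat.add_sub_cancel' hNj]
      exact Set.mem_symmDiff.mpr (Or.inr ⟨not_not.mp hj2, hj1⟩)
  -- measure bound on the tails
  have hbound : ∀ N, ν (symmDiff (A (ψ N)) L) ≤ 2 * (2 : ℝ≥0∞)⁻¹ ^ N := by
    intro N
    calc ν (symmDiff (A (ψ N)) L)
        ≤ ν (⋃ i : ℕ, symmDiff (A (ψ (N + i))) (A (ψ (N + i + 1)))) :=
          measure_mono (hsub N)
      _ ≤ ∑' i : ℕ, ν (symmDiff (A (ψ (N + i))) (A (ψ (N + i + 1)))) :=
          measure_iUnion_le _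
      _ ≤ ∑' i : ℕ, (2 : ℝ≥0∞)⁻¹ ^ (N + i) := ENNReal.tsum_le_tsum fun i => key (N + i)
      _ = (2 : ℝ≥0∞)⁻¹ ^ N * ∑' i : ℕ, (2 : ℝ≥0∞)⁻¹ ^ i := by
          simp_rw [pow_add]; rw [ENNReal.tsum_mul_left]
      _ = (2 : ℝ≥0∞)⁻¹ ^ N * 2 := by
          rw [ENNReal.tsum_geometric, ENNReal.one_sub_inv_two, inv_inv]
      _ = 2 * (2 : ℝ≥0∞)⁻¹ ^ N := mul_comm _ _
  -- measurability and finiteness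
  have hLmeas : MeasurableSet L :=
    MeasurableSet.iUnion fun N => MeasurableSet.iInter fun k =>
      MeasurableSet.iInter fun _ => hmeas _
  have hLfin : ν L < ⊤ := by
    have hincl : L ⊆ A (ψ 0) ∪ symmDiff (A (ψ 0)) L := by
      intro x hx
      by_cases h : x ∈ A (ψ 0)
      · exact Or.inl h
      · exact Or.inr (Set.mem_symmDiff.mpr (Or.inr ⟨hx, h⟩))
    calc ν L ≤ ν (A (ψ 0) ∪ symmDiff (A (ψ 0)) L) := measure_mono hincl
      _ ≤ ν (A (ψ 0)) + ν (symmDiff (A (ψ 0)) L) := measure_union_le _ _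
      _ < ⊤ := by
          apply ENNReal.add_lt_top.mpr
          exact ⟨hfin _, lt_of_le_of_lt (hbound 0) (by norm_num)⟩
  -- the convex representative
  set C : Set (ℝ × ℝ) := ⋃ N, ⋂ k, ⋂ (_ : N ≤ k), B (ψ k) with hC
  have hCmem : ∀ x, x ∈ C ↔ ∃ N, ∀ k, N ≤ k → x ∈ B (ψ k) := by
    intro x; simp [hC, mem_iUnion, mem_iInter]
  have hCconv : Convex ℝ C := by
    intro x hx y hy a b ha hb hab
    obtain ⟨M, hM⟩ := (hCmem x).mp hx
    obtain ⟨M', hM'⟩ := (hCmem y).mp hy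
    refine (hCmem _).mpr ⟨max M M', fun k hk => ?_⟩
    exact hBconv (ψ k) (hM k (le_trans (le_max_left _ _) hk))
      (hM' k (le_trans (le_max_right _ _) hk)) ha hb hab
  have hLC : ν (symmDiff L C) = 0 := by
    have hincl : symmDiff L C ⊆ ⋃ k, symmDiff (A (ψ k)) (B (ψ k)) := by
      intro x hx
      by_contra h
      have hiff : ∀ k, x ∈ A (ψ k) ↔ x ∈ B (ψ k) := by
        intro k
        have hnot : x ∉ symmDiff (A (ψ k)) (B (ψ k)) :=
          fun hm => h (mem_iUnion.mpr ⟨k, hm⟩)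
        rw [Set.mem_symmDiff] at hnot
        push_neg at hnot
        exact ⟨hnot.1, hnot.2⟩
      have : x ∈ L ↔ x ∈ C := by
        rw [hLmem, hCmem]
        constructor
        · rintro ⟨N, hN⟩; exact ⟨N, fun k hk => (hiff k).mp (hN k hk)⟩
        · rintro ⟨N, hN⟩; exact ⟨N, fun k hk => (hiff k).mpr (hN k hk)⟩
      rw [Set.mem_symmDiff] at hx
      rcases hx with ⟨h1, h2⟩ | ⟨h1, h2⟩
      · exact h2 (this.mp h1)
      · exact h2 (this.mpr h1)
    refine le_antisymm ?_ zero_le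
    calc ν (symmDiff L C) ≤ ν (⋃ k, symmDiff (A (ψ k)) (B (ψ k))) := measure_mono hincl
      _ ≤ ∑' k, ν (symmDiff (A (ψ k)) (B (ψ k))) := measure_iUnion_le _
      _ = 0 := by simp [hBnull]
  -- convergence of the whole sequence
  have htend : Tendsto (fun n => ν (symmDiff (A n) L)) atTop (nhds 0) := by
    rw [ENNReal.tendsto_nhds_zero]
    intro ε hε
    obtain ⟨k, hk⟩ := ENNReal.exists_inv_two_pow_lt hε.ne'
    refine eventually_atTop.mpr ⟨φ (k + 2), fun n hn => ?_⟩
    have h1 : ν (symmDiff (A n) (A (ψ (k + 2)))) ≤ (2 : ℝ≥0∞)⁻¹ ^ (k + 2) := by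
      rw [← hofpow]
      exact le_of_lt (hφ (k + 2) _ _ hn (hψφ (k + 2)))
    have h2 : ν (symmDiff (A (ψ (k + 2))) L) ≤ 2 * (2 : ℝ≥0∞)⁻¹ ^ (k + 2) := hbound (k + 2)
    have htri : ν (symmDiff (A n) L) ≤
        ν (symmDiff (A n) (A (ψ (k + 2)))) + ν (symmDiff (A (ψ (k + 2))) L) :=
      le_trans (measure_mono (symmDiff_triangle _ _ _)) (measure_union_le _ _)
    have harith : (2 : ℝ≥0∞)⁻¹ ^ (k + 2) + 2 * (2 : ℝ≥0∞)⁻¹ ^ (k + 2)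
        ≤ (2 : ℝ≥0∞)⁻¹ ^ k := by
      have h4 : ((2 : ℝ≥0∞)⁻¹) ^ (k + 2) = (2 : ℝ≥0∞)⁻¹ ^ k * (2⁻¹ * 2⁻¹) := by
        rw [pow_add]; ring
      rw [h4]
      calc (2 : ℝ≥0∞)⁻¹ ^ k * (2⁻¹ * 2⁻¹) + 2 * ((2 : ℝ≥0∞)⁻¹ ^ k * (2⁻¹ * 2⁻¹))
          = (2 : ℝ≥0∞)⁻¹ ^ k * (2⁻¹ * 2⁻¹ + 2 * (2⁻¹ * 2⁻¹)) := by ring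
        _ ≤ (2 : ℝ≥0∞)⁻¹ ^ k * 1 := by
            apply mul_le_mul_right
            have h2inv : (2 : ℝ≥0∞) * 2⁻¹ = 1 := ENNReal.mul_inv_cancel (by norm_num) (by norm_num)
            calc (2 : ℝ≥0∞)⁻¹ * 2⁻¹ + 2 * (2⁻¹ * 2⁻¹)
                = 2⁻¹ * 2⁻¹ + (2 * 2⁻¹) * 2⁻¹ := by ring
              _ = 2⁻¹ * 2⁻¹ + 2⁻¹ := by rw [h2inv, one_mul]
              _ ≤ 2⁻¹ + 2⁻¹ := by
                  apply add_le_add_left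
                  calc (2 : ℝ≥0∞)⁻¹ * 2⁻¹ ≤ 1 * 2⁻¹ := by
                        apply mul_le_mul_left
                        exact ENNReal.inv_le_one.mpr (by norm_num)
                    _ = 2⁻¹ := one_mul _
              _ = 2 * 2⁻¹ := by ring
              _ = 1 := h2inv
        _ = (2 : ℝ≥0∞)⁻¹ ^ k := mul_one _
    calc ν (symmDiff (A n) L)
        ≤ ν (symmDiff (A n) (A (ψ (k + 2)))) + ν (symmDiff (A (ψ (k + 2))) L) := htri
      _ ≤ (2 : ℝ≥0∞)⁻¹ ^ (k + 2) + 2 * (2 : ℝ≥0∞)⁻¹ ^ (k + 2) := add_le_add h1 h2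
      _ ≤ (2 : ℝ≥0∞)⁻¹ ^ k := harith
      _ ≤ ε := le_of_lt hk
  exact ⟨L, hLmeas, hLfin, ⟨C, hCconv, hLC⟩, htend⟩
end

section
/- Let A^k be convex subsets of ℝ² and suppose the indicator functions χ_{A^k} converge pointwise on ℝ² \ S (for some Lebesgue-null set S) to the indicator χ_A of a set A ⊂ ℝ² \ S. Then the symmetric difference of A and its convex hull is contained in S; in particular A equals a convex set up to a Lebesgue-null set. -/
open MeasureTheory Filter Set

/-- if indicators of convex sets `Ak k` converge pointwise off a
Lebesgue-null set `S` to the indicator of `A` (with `A ∩ S = ∅`), then the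
symmetric difference of `A` and its convex hull is contained in `S`; in
particular `A` equals a convex set up to a Lebesgue-null set. -/
theorem limit_of_convex_ae_convex (A : Set (ℝ × ℝ)) (Ak : ℕ → Set (ℝ × ℝ))
    (S : Set (ℝ × ℝ)) (hconv : ∀ k, Convex ℝ (Ak k))
    (hS : volume S = 0) (hAS : A ∩ S = ∅)
    (hpt : ∀ p ∉ S, Tendsto (fun k => (Ak k).indicator (fun _ => (1 : ℝ)) p) atTop
      (nhds (A.indicator (fun _ => (1 : ℝ)) p))) :
    symmDiff A (convexHull ℝ A) ⊆ S ∧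
      ∃ C : Set (ℝ × ℝ), Convex ℝ C ∧ volume (symmDiff A C) = 0 := by
  set T : Set (ℝ × ℝ) := {p | ∀ᶠ k in atTop, p ∈ Ak k} with hTdef
  have hT : Convex ℝ T := by
    intro x hx y hy a b ha hb hab
    filter_upwards [hx, hy] with k hxk hyk
    exact hconv k hxk hyk ha hb hab
  have hAT : A ⊆ T := by
    intro p hpA
    have hpS : p ∉ S := by
      intro hpS
      have : p ∈ A ∩ S := ⟨hpA, hpS⟩
      rw [hAS] at this
      exact this
    have h1 : A.indicator (fun _ => (1 : ℝ)) p = 1 := indicator_of_mem hpA _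
    have ht := hpt p hpS
    rw [h1] at ht
    have hgt : ∀ᶠ k in atTop, (Ak k).indicator (fun _ => (1 : ℝ)) p > 0 :=
      ht.eventually (eventually_gt_nhds (by norm_num))
    filter_upwards [hgt] with k hk
    by_contra hmem
    rw [indicator_of_notMem hmem] at hk
    exact lt_irrefl 0 hk
  have hTA : ∀ p ∈ T, p ∉ S → p ∈ A := by
    intro p hpT hpS
    by_contra hpA
    have h0 : A.indicator (fun _ => (1 : ℝ)) p = 0 := indicator_of_notMem hpA _
    have ht := hpt p hpS
    rw [h0] at ht
    have h1 : Tendsto (fun k => (Ak k).indicator (fun _ => (1 : ℝ)) p) atTop (nhds 1) := by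
      refine Tendsto.congr' ?_ tendsto_const_nhds
      filter_upwards [hpT] with k hk
      exact (indicator_of_mem hk (fun _ => (1 : ℝ))).symm
    have := tendsto_nhds_unique ht h1
    norm_num at this
  have hhull : convexHull ℝ A ⊆ T := convexHull_min hAT hT
  have hsub : symmDiff A (convexHull ℝ A) ⊆ S := by
    intro p hp
    rw [Set.mem_symmDiff] at hp
    rcases hp with ⟨hpA, hphull⟩ | ⟨hphull, hpA⟩
    · exact absurd (subset_convexHull ℝ A hpA) hphull
    · by_contra hpS
      exact hpA (hTA p (hhull hphull) hpS)
  exact ⟨hsub, convexHull ℝ A, convex_convexHull ℝ A,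
    measure_mono_null hsub hS⟩
end
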